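/- Let X be a topological space and let Y be a complete Hausdorff commutative topological additive group. If Φ is a nontrivial (NeBot) filter on the space C(X,Y) of continuous maps from X to Y that is continuously Cauchy at every point of X, then there exists a continuous map f : X → Y such that Φ converges continuously to f. (This is the paper's Theorem 2 — completeness of the convergence group C_c(X,Y) — stated for topological X.) -/

import Mathlib

open Filter Topology Uniformity

/-!
Being continuously Cauchy at `x` says exactly that the maps in `Φ` are uniformly Cauchy on the
neighbourhood filter of `x`. Completeness of `Y` yields a pointwise limit `f`, to which `Φ` then
converges locally uniformly; so `f` is continuous, and locally uniform convergence to a continuous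
limit is continuous convergence.
-/

section UniformSpace

variable {ι α β : Type*} [UniformSpace β] {F : ι → α → β} {p : Filter ι}

theorem UniformCauchySeqOnFilter.cauchy_map_apply [p.NeBot] {p' : Filter α} {x : α}
    (hF : UniformCauchySeqOnFilter F p p') (hx : pure x ≤ p') :
    Cauchy (p.map fun i => F i x) := by
  refine cauchy_map_iff'.2 fun u hu => ?_
  exact (by simpa using hF.mono_right hx u hu : ∀ᶠ i in p ×ˢ p, (F i.1 x, F i.2 x) ∈ u)

variable [TopologicalSpace α]

theorem TendstoLocallyUniformly.tendsto_eval_nhds_prod {f : α → β}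
    (hF : TendstoLocallyUniformly F f p) {x : α} (hf : ContinuousAt f x) :
    Tendsto (fun q : α × ι => F q.2 q.1) (𝓝 x ×ˢ p) (𝓝 (f x)) :=
  tendsto_comp_of_locally_uniform_limit (F := fun q : α × ι => F q.2) hf tendsto_fst
    fun u hu => (hF u hu x).imp fun _ ⟨ht, hev⟩ => ⟨ht, tendsto_snd.eventually hev⟩

theorem exists_continuous_tendstoLocallyUniformly_of_uniformCauchySeqOnFilter
    [CompleteSpace β] [p.NeBot] (hcont : ∀ i, Continuous (F i))
    (hF : ∀ x, UniformCauchySeqOnFilter F p (𝓝 x)) :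
    ∃ f, Continuous f ∧ TendstoLocallyUniformly F f p := by
  choose f hf using fun x => CompleteSpace.complete ((hF x).cauchy_map_apply (pure_le_nhds x))
  have hunif x : TendstoUniformlyOnFilter F f p (𝓝 x) :=
    (hF x).tendstoUniformlyOnFilter_of_tendsto (.of_forall hf)
  refine ⟨f, continuous_iff_continuousAt.2 fun x => ?_, tendstoLocallyUniformly_iff_filter.2 hunif⟩
  exact (hunif x).tendsto_of_eventually_tendsto (.of_forall fun i => (hcont i).continuousAt) (hf x)

end UniformSpace

theorem uniformCauchySeqOnFilter_iff_tendsto_sub {ι α G : Type*} [AddGroup G] [UniformSpace G]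
    [IsUniformAddGroup G] {F : ι → α → G} {p : Filter ι} {p' : Filter α} :
    UniformCauchySeqOnFilter F p p' ↔
      Tendsto (fun q : α × (ι × ι) => F q.2.1 q.1 - F q.2.2 q.1) (p' ×ˢ (p ×ˢ p)) (𝓝 0) := by
  change Tendsto (fun m : (ι × ι) × α => (F m.1.1 m.2, F m.1.2 m.2)) ((p ×ˢ p) ×ˢ p') (𝓤 G) ↔ _
  rw [uniformity_eq_comap_nhds_zero_swapped, tendsto_comap_iff, prod_comm, tendsto_map'_iff]
  rfl

theorem completeness_of_Cc_group_general
    {X : Type*} [TopologicalSpace X]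
    {Y : Type*} [AddCommGroup Y] [UniformSpace Y] [IsUniformAddGroup Y]
    [CompleteSpace Y]
    (Φ : Filter C(X, Y)) [Φ.NeBot]
    (hΦ : ∀ x : X,
      Filter.map (fun p : X × (C(X, Y) × C(X, Y)) => p.2.1 p.1 - p.2.2 p.1)
        (nhds x ×ˢ (Φ ×ˢ Φ)) ≤ nhds 0) :
    ∃ f : C(X, Y), ∀ x : X,
      Filter.map (fun p : X × C(X, Y) => p.2 p.1) (nhds x ×ˢ Φ) ≤ nhds (f x) := by
  obtain ⟨f, hf, hΦf⟩ :=
    exists_continuous_tendstoLocallyUniformly_of_uniformCauchySeqOnFilter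
      (F := fun g : C(X, Y) => ⇑g) (fun g => g.continuous)
      fun x => uniformCauchySeqOnFilter_iff_tendsto_sub.2 (hΦ x)
  exact ⟨⟨f, hf⟩, fun x => hΦf.tendsto_eval_nhds_prod hf.continuousAt⟩

/-- Theorem 2: if `Y` is a complete Hausdorff commutative topological additive group
(with its canonical uniform structure), then every continuously Cauchy filter on
`C(X, Y)` converges continuously to some continuous map `f : X → Y`. -/
theorem completeness_of_Cc_group
    {X : Type*} [TopologicalSpace X]
    {Y : Type*} [AddCommGroup Y] [UniformSpace Y] [IsUniformAddGroup Y]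
    [CompleteSpace Y] [T2Space Y]
    (Φ : Filter C(X, Y)) [Φ.NeBot]
    (hΦ : ∀ x : X,
      Filter.map (fun p : X × (C(X, Y) × C(X, Y)) => p.2.1 p.1 - p.2.2 p.1)
        (nhds x ×ˢ (Φ ×ˢ Φ)) ≤ nhds 0) :
    ∃ f : C(X, Y), ∀ x : X,
      Filter.map (fun p : X × C(X, Y) => p.2 p.1) (nhds x ×ˢ Φ) ≤ nhds (f x) :=
  completeness_of_Cc_group_general Φ hΦ
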